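/- Consider a discrete-time interconnected system with control inputs, x_{i,k+1} = f_i(x_{i,k}, {x_{j,k}}_{j∈ℰ_i}, u_{i,k}, d_{i,k}), closed with locally Lipschitz feedback laws u_{i,k} = π_i(x_{i,k}, {x_{j,k}}_{j∈ℰ_i}). Suppose there exist ε ∈ (0,1), ψ ≥ 0, class-𝒦_∞ functions α1, α2, nonnegative gains γ_{i,j} with max_{i∈𝒩} Σ_{j∈ℰ_i∪{i}} γ_{i,j} ≤ 1−ε, and functions V_i : ℝ^{n_i} → [0,∞) such that α1(|x|₂) ≤ V_i(x) ≤ α2(|x|₂) and, for all admissible states and disturbances, V_i(f_i(x_i, {x_j}_{j∈ℰ_i}, π_i(x_i, {x_j}_{j∈ℰ_i}), d_i)) ≤ Σ_{j∈ℰ_i∪{i}} γ_{i,j} V_j(x_j) + ψ|d_i|₂. Then the closed-loop interconnected system is scalably input-to-state stable. -/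

import Mathlib

open scoped NNReal
open Filter

noncomputable section

abbrev Evec (m : ℕ) : Type := EuclideanSpace ℝ (Fin m)

def IsClassK (α : ℝ≥0 → ℝ≥0) : Prop :=
  Continuous α ∧ StrictMono α ∧ α 0 = 0

def IsClassKInfty (α : ℝ≥0 → ℝ≥0) : Prop :=
  IsClassK α ∧ Tendsto α atTop atTop

def IsClassKL (β : ℝ≥0 → ℕ → ℝ≥0) : Prop :=
  (∀ k : ℕ, IsClassK fun s => β s k) ∧
    ∀ s : ℝ≥0, Tendsto (fun k => β s k) atTop (nhds 0)

/-
Take the largest Lyapunov value over all agents, `W k = max_i V_i(x_{i,k})`. Since each row of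
gains sums to at most `r = 1 - ε`, the decrease condition gives `W (k+1) ≤ r W k + ψ C`, so
`W k ≤ r^k α₂(max_i |x_{i,0}|) + ψ C / ε`, a bound that does not depend on the number of agents.
Inverting the lower sandwich bound `α₁` and splitting the sum with
`α₁⁻¹(a + b) ≤ α₁⁻¹(2a) + α₁⁻¹(2b)` yields the 𝒦ℒ and 𝒦 gains.
-/

open Finset

lemma isClassK_const_mul {c : ℝ≥0} (hc : 0 < c) : IsClassK (c * ·) :=
  ⟨continuous_const.mul continuous_id, fun _ _ h => mul_lt_mul_of_pos_left h hc, mul_zero c⟩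

lemma IsClassK.comp {g α : ℝ≥0 → ℝ≥0} (hg : IsClassK g) (hα : IsClassK α) :
    IsClassK (g ∘ α) :=
  ⟨hg.1.comp hα.1, hg.2.1.comp hα.2.1, by rw [Function.comp_apply, hα.2.2, hg.2.2]⟩

lemma OrderIso.isClassK (e : ℝ≥0 ≃o ℝ≥0) : IsClassK e :=
  ⟨e.toHomeomorph.continuous, e.strictMono, e.map_bot⟩

lemma IsClassKInfty.surjective {α : ℝ≥0 → ℝ≥0} (hα : IsClassKInfty α) :
    Function.Surjective α := by
  intro y
  obtain ⟨b, hb⟩ := (tendsto_atTop.1 hα.2 y).exists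
  obtain ⟨t, -, ht⟩ := intermediate_value_Icc (zero_le : (0 : ℝ≥0) ≤ b) hα.1.1.continuousOn
    ⟨by simp [hα.1.2.2], hb⟩
  exact ⟨t, ht⟩

def IsClassKInfty.orderIso {α : ℝ≥0 → ℝ≥0} (hα : IsClassKInfty α) : ℝ≥0 ≃o ℝ≥0 :=
  StrictMono.orderIsoOfSurjective α hα.1.2.1 hα.surjective

lemma IsClassKInfty.orderIso_symm_apply_self {α : ℝ≥0 → ℝ≥0} (hα : IsClassKInfty α) (t : ℝ≥0) :
    hα.orderIso.symm (α t) = t :=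
  StrictMono.orderIsoOfSurjective_symm_apply_self α _ _ t

lemma Monotone.map_add_le_map_two_mul_add {g : ℝ≥0 → ℝ≥0} (hg : Monotone g) (a b : ℝ≥0) :
    g (a + b) ≤ g (2 * a) + g (2 * b) :=
  calc g (a + b) ≤ g (2 * max a b) :=
        hg (by rw [two_mul]; exact add_le_add (le_max_left a b) (le_max_right a b))
    _ = max (g (2 * a)) (g (2 * b)) := by rw [mul_max_of_nonneg _ _ zero_le_two, hg.map_max]
    _ ≤ g (2 * a) + g (2 * b) := max_le_add_of_nonneg zero_le zero_le

lemma NNReal.le_pow_mul_add_div_of_le_mul_add {W : ℕ → ℝ≥0} {r c : ℝ≥0} (hr : r < 1)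
    (hW : ∀ k, W (k + 1) ≤ r * W k + c) (k : ℕ) : W k ≤ r ^ k * W 0 + c / (1 - r) := by
  have hfix : r * (c / (1 - r)) + c = c / (1 - r) :=
    calc r * (c / (1 - r)) + c = (r + (1 - r)) * (c / (1 - r)) := by
          rw [add_mul, mul_div_cancel₀ _ (tsub_pos_of_lt hr).ne']
      _ = c / (1 - r) := by rw [add_tsub_cancel_of_le hr.le, one_mul]
  induction k with
  | zero => simp
  | succ k ih =>
    calc W (k + 1) ≤ r * (r ^ k * W 0 + c / (1 - r)) + c := (hW k).trans (by gcongr)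
      _ = r ^ (k + 1) * W 0 + (r * (c / (1 - r)) + c) := by ring
      _ = r ^ (k + 1) * W 0 + c / (1 - r) := by rw [hfix]

lemma Finset.sup_univ_le_mul_sup_univ_add {ι : Type*} [Fintype ι] {s : ι → Finset ι}
    {γ : ι → ι → ℝ≥0} {v w : ι → ℝ≥0} {r c : ℝ≥0} (hγ : ∀ i, ∑ j ∈ s i, γ i j ≤ r)
    (hw : ∀ i, w i ≤ ∑ j ∈ s i, γ i j * v j + c) : univ.sup w ≤ r * univ.sup v + c := by
  refine Finset.sup_le fun i _ => (hw i).trans ?_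
  gcongr
  calc ∑ j ∈ s i, γ i j * v j ≤ ∑ j ∈ s i, γ i j * univ.sup v := by
        gcongr with j; exact le_sup (mem_univ j)
    _ = (∑ j ∈ s i, γ i j) * univ.sup v := (sum_mul ..).symm
    _ ≤ r * univ.sup v := by gcongr; exact hγ i

theorem closed_loop_sISS_of_vector_control_lyapunov_general
    {ι : Type} [Fintype ι] [DecidableEq ι]
    (n p q : ι → ℕ) (nbr : ι → Finset ι)
    (f : ∀ i : ι, (∀ j : ι, Evec (n j)) → Evec (q i) → Evec (p i) → Evec (n i))
    (π : ∀ i : ι, (∀ j : ι, Evec (n j)) → Evec (q i))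
    (ε : ℝ≥0) (hε0 : 0 < ε) (hε1 : ε < 1) (ψ : ℝ≥0)
    (α₁ α₂ : ℝ≥0 → ℝ≥0) (hα₁ : IsClassKInfty α₁) (hα₂ : IsClassKInfty α₂)
    (γ : ι → ι → ℝ≥0)
    (hsg : ∀ i : ι, ∑ j ∈ insert i (nbr i), γ i j ≤ 1 - ε)
    (V : ∀ i : ι, Evec (n i) → ℝ≥0)
    (hsandwich : ∀ (i : ι) (x : Evec (n i)), α₁ ‖x‖₊ ≤ V i x ∧ V i x ≤ α₂ ‖x‖₊)
    (hdec : ∀ (i : ι) (x : ∀ j : ι, Evec (n j)) (d : Evec (p i)),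
      V i (f i x (π i x) d) ≤
        ∑ j ∈ insert i (nbr i), γ i j * V j (x j) + ψ * ‖d‖₊) :
    ∃ β : ℝ≥0 → ℕ → ℝ≥0, ∃ μ : ℝ≥0 → ℝ≥0, IsClassKL β ∧ IsClassK μ ∧
      ∀ (x : ℕ → ∀ j : ι, Evec (n j)) (d : ℕ → ∀ i : ι, Evec (p i)),
        (∀ (k : ℕ) (i : ι), x (k + 1) i = f i (x k) (π i (x k)) (d k i)) →
        ∀ C : ℝ≥0, (∀ (k : ℕ) (i : ι), ‖d k i‖₊ ≤ C) →
        ∀ (k : ℕ) (i : ι),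
          ‖x k i‖₊ ≤ β (Finset.univ.sup fun j => ‖x 0 j‖₊) k + μ C := by
  set g := hα₁.orderIso.symm
  set r : ℝ≥0 := 1 - ε
  have hr0 : 0 < r := tsub_pos_of_lt hε1
  have hr1 : r < 1 := tsub_lt_self one_pos hε0
  -- the `+ 1` keeps `μ` strictly increasing when `ψ = 0`
  refine ⟨fun s k => g (2 * r ^ k * α₂ s), fun c => g ((2 * ψ / (1 - r) + 1) * c),
    ⟨fun k => ?_, fun s => ?_⟩, g.isClassK.comp (isClassK_const_mul (by positivity)), ?_⟩
  · exact g.isClassK.comp ((isClassK_const_mul (by positivity)).comp hα₂.1)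
  · have hlim : Tendsto (fun k => 2 * r ^ k * α₂ s) atTop (nhds 0) := by
      simpa using ((NNReal.tendsto_pow_atTop_nhds_zero_of_lt_one hr1).const_mul 2).mul_const (α₂ s)
    simpa [Function.comp_def, g.isClassK.2.2] using (g.continuous.tendsto 0).comp hlim
  intro x d hdyn C hC k i
  set M := univ.sup fun j => ‖x 0 j‖₊
  set W : ℕ → ℝ≥0 := fun k => univ.sup fun j => V j (x k j)
  have hW0 : W 0 ≤ α₂ M := Finset.sup_le fun j _ =>
    (hsandwich j _).2.trans (hα₂.1.2.1.monotone (le_sup (f := fun j => ‖x 0 j‖₊) (mem_univ j)))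
  have hWsucc : ∀ k, W (k + 1) ≤ r * W k + ψ * C := fun k =>
    Finset.sup_univ_le_mul_sup_univ_add hsg fun i => by
      rw [hdyn]; exact (hdec i (x k) (d k i)).trans (by gcongr; exact hC k i)
  calc ‖x k i‖₊ = g (α₁ ‖x k i‖₊) := (hα₁.orderIso_symm_apply_self _).symm
    _ ≤ g (W k) := g.monotone
        ((hsandwich i _).1.trans (le_sup (f := fun j => V j (x k j)) (mem_univ i)))
    _ ≤ g (r ^ k * α₂ M + ψ * C / (1 - r)) :=
        g.monotone ((NNReal.le_pow_mul_add_div_of_le_mul_add hr1 hWsucc k).trans (by gcongr))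
    _ ≤ g (2 * (r ^ k * α₂ M)) + g (2 * (ψ * C / (1 - r))) :=
        g.monotone.map_add_le_map_two_mul_add _ _
    _ ≤ g (2 * r ^ k * α₂ M) + g ((2 * ψ / (1 - r) + 1) * C) := by
        refine add_le_add (by rw [mul_assoc]) (g.monotone ?_)
        calc 2 * (ψ * C / (1 - r)) = 2 * ψ / (1 - r) * C := by ring
          _ ≤ (2 * ψ / (1 - r) + 1) * C := by gcongr; exact le_self_add

/-- **Closed-loop sISS from a vector control Lyapunov certificate.** A discrete-time
interconnected system with control inputs `x_{i,k+1} = f i (x_k, u_{i,k}, d_{i,k})`,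
closed with locally Lipschitz feedback laws `u_{i,k} = π i (x_k)`, admitting functions
`V i` with class-𝒦∞ sandwich bounds, small-gain row sums at most `1 - ε`, and the
closed-loop decremental inequality for all admissible states and disturbances, is
scalably input-to-state stable. -/
theorem closed_loop_sISS_of_vector_control_lyapunov
    {ι : Type} [Fintype ι] [Nonempty ι] [DecidableEq ι]
    (n p q : ι → ℕ) (nbr : ι → Finset ι)
    (f : ∀ i : ι, (∀ j : ι, Evec (n j)) → Evec (q i) → Evec (p i) → Evec (n i))
    (π : ∀ i : ι, (∀ j : ι, Evec (n j)) → Evec (q i))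
    (hπ : ∀ i : ι, LocallyLipschitz (π i))
    (ε : ℝ≥0) (hε0 : 0 < ε) (hε1 : ε < 1) (ψ : ℝ≥0)
    (α₁ α₂ : ℝ≥0 → ℝ≥0) (hα₁ : IsClassKInfty α₁) (hα₂ : IsClassKInfty α₂)
    (γ : ι → ι → ℝ≥0)
    (hsg : ∀ i : ι, ∑ j ∈ insert i (nbr i), γ i j ≤ 1 - ε)
    (V : ∀ i : ι, Evec (n i) → ℝ≥0)
    (hsandwich : ∀ (i : ι) (x : Evec (n i)), α₁ ‖x‖₊ ≤ V i x ∧ V i x ≤ α₂ ‖x‖₊)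
    (hdec : ∀ (i : ι) (x : ∀ j : ι, Evec (n j)) (d : Evec (p i)),
      V i (f i x (π i x) d) ≤
        ∑ j ∈ insert i (nbr i), γ i j * V j (x j) + ψ * ‖d‖₊) :
    ∃ β : ℝ≥0 → ℕ → ℝ≥0, ∃ μ : ℝ≥0 → ℝ≥0, IsClassKL β ∧ IsClassK μ ∧
      ∀ (x : ℕ → ∀ j : ι, Evec (n j)) (d : ℕ → ∀ i : ι, Evec (p i)),
        (∀ (k : ℕ) (i : ι), x (k + 1) i = f i (x k) (π i (x k)) (d k i)) →
        ∀ C : ℝ≥0, (∀ (k : ℕ) (i : ι), ‖d k i‖₊ ≤ C) →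
        ∀ (k : ℕ) (i : ι),
          ‖x k i‖₊ ≤ β (Finset.univ.sup fun j => ‖x 0 j‖₊) k + μ C :=
  closed_loop_sISS_of_vector_control_lyapunov_general n p q nbr f π ε hε0 hε1 ψ α₁ α₂ hα₁ hα₂ γ hsg
    V hsandwich hdec
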